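/- arXiv:1204.4373 — 4 statements merged into one kernel-verified Lean document; each statement's English description precedes it below -/
import Mathlib

section
/- Let A be a symmetric real n×n matrix and S ⊆ {1,…,n} a nonempty index set with maximal element k. If the principal submatrix A_{S∖{k}} indexed by S∖{k} is positive definite, then A_S is positive definite if and only if det(A_S) > 0. -/
/-!
Split off the index `k`, writing `A_S` in block form with the positive definite block
`A₁ = A_{S \ {k}}` and a `1 × 1` corner. Its determinant is `det A₁` times the (scalar) Schur
complement, so a positive determinant makes the Schur complement positive. The block matrix is
then positive semidefinite by the Schur complement criterion, and being invertible it is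
positive definite.
-/

open Matrix Finset

namespace Matrix

variable {ι m n : Type*}

theorem posDef_submatrix_equiv [DecidableEq m] [DecidableEq n] {M : Matrix n n ℝ} (e : m ≃ n) :
    (M.submatrix e e).PosDef ↔ M.PosDef :=
  ⟨fun h => by simpa using h.submatrix e.symm.injective, fun h => h.submatrix e.injective⟩

theorem posSemidef_of_det_nonneg [Fintype n] [DecidableEq n] [Unique n] {M : Matrix n n ℝ}
    (h : 0 ≤ M.det) : M.PosSemidef := by
  have hM : M = diagonal fun _ => M.det := by
    ext i j
    rw [Subsingleton.elim i j, diagonal_apply_eq, det_unique, Unique.eq_default j]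
  rw [hM]
  exact PosSemidef.diagonal fun _ => h

theorem IsHermitian.eq_fromBlocks_toBlocks {M : Matrix (m ⊕ n) (m ⊕ n) ℝ} (hM : M.IsHermitian) :
    M = Matrix.fromBlocks M.toBlocks₁₁ M.toBlocks₁₂ M.toBlocks₁₂ᴴ M.toBlocks₂₂ := by
  have h₂₁ : M.toBlocks₂₁ = M.toBlocks₁₂ᴴ := by
    ext i j
    exact (hM.apply (Sum.inr i) (Sum.inl j)).symm
  rw [← h₂₁, fromBlocks_toBlocks]

theorem posDef_iff_det_pos_of_posDef_toBlocks₁₁ [Fintype m] [Fintype n] [DecidableEq m]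
    [DecidableEq n] [Unique n] {M : Matrix (m ⊕ n) (m ⊕ n) ℝ} (hM : M.IsHermitian)
    (h₁₁ : M.toBlocks₁₁.PosDef) :
    M.PosDef ↔ 0 < M.det := by
  refine ⟨PosDef.det_pos, fun hdet => ?_⟩
  let _ := h₁₁.isUnit.invertible
  rw [hM.eq_fromBlocks_toBlocks] at hdet ⊢
  have hschur : 0 < (M.toBlocks₂₂ - M.toBlocks₁₂ᴴ * M.toBlocks₁₁⁻¹ * M.toBlocks₁₂).det := by
    rw [det_fromBlocks₁₁, invOf_eq_nonsing_inv] at hdet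
    exact pos_of_mul_pos_right hdet h₁₁.det_pos.le
  have hsemi := (PosDef.fromBlocks₁₁ M.toBlocks₁₂ M.toBlocks₂₂ h₁₁).2
    (posSemidef_of_det_nonneg hschur.le)
  exact hsemi.posDef_iff_det_ne_zero.2 hdet.ne'

theorem posDef_iff_det_pos_of_posDef_submatrix_ne [Fintype ι] [DecidableEq ι]
    {M : Matrix ι ι ℝ} (hM : M.IsHermitian) (a : ι)
    (h : (M.submatrix (Subtype.val : {i // i ≠ a} → ι) Subtype.val).PosDef) :
    M.PosDef ↔ 0 < M.det := by
  let e : {i // i ≠ a} ⊕ PUnit.{1} ≃ ι :=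
    (Equiv.optionEquivSumPUnit _).symm.trans (Equiv.optionSubtypeNe a)
  rw [← posDef_submatrix_equiv e, ← det_submatrix_equiv_self e]
  exact posDef_iff_det_pos_of_posDef_toBlocks₁₁ (hM.submatrix e) h

end Matrix

/-- For a symmetric real `n × n` matrix `A` and a nonempty index set `S` with
maximal element `k`: if the principal submatrix indexed by `S \ {k}` is
positive definite, then the principal submatrix indexed by `S` is positive
definite iff its determinant is positive. -/
theorem posDef_iff_det_pos_of_erase_max_posDef
    {n : ℕ} (A : Matrix (Fin n) (Fin n) ℝ) (hA : A.IsSymm)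
    (S : Finset (Fin n)) (hS : S.Nonempty)
    (h : (A.submatrix (fun i : {x // x ∈ S.erase (S.max' hS)} => (i : Fin n))
          (fun j : {x // x ∈ S.erase (S.max' hS)} => (j : Fin n))).PosDef) :
    (A.submatrix (fun i : {x // x ∈ S} => (i : Fin n))
        (fun j : {x // x ∈ S} => (j : Fin n))).PosDef ↔
      0 < (A.submatrix (fun i : {x // x ∈ S} => (i : Fin n))
        (fun j : {x // x ∈ S} => (j : Fin n))).det := by
  let k : {x // x ∈ S} := ⟨S.max' hS, S.max'_mem hS⟩
  let f : {i // i ≠ k} → {x // x ∈ S.erase (S.max' hS)} := fun i =>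
    ⟨i.1, mem_erase.2 ⟨fun hi => i.2 (Subtype.ext hi), i.1.2⟩⟩
  have hf : Function.Injective f := fun i j hij => by
    have hval := congrArg Subtype.val hij
    exact Subtype.ext (Subtype.ext hval)
  refine posDef_iff_det_pos_of_posDef_submatrix_ne ?_ k (h.submatrix hf)
  exact (isHermitian_iff_isSymm.2 hA).submatrix _
end

section
/- For t ≠ 1, j ≠ 1, the determinant of the 4×4 matrix with rows (−1,0,0,0), (0,0,−1,ξ^{t−2}), (−i^m η, i^m η ξ^{j−1}, −1, 0), (2 i^m η ξ^{2k+1−j}, i^m η ξ^{2k}, 0, −1) equals i^m η (ξ^{j−1} − ξ^{2k+t−2}); consequently it vanishes if and only if t + 2k − j − 1 ≡ 0 (mod 3). -/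
open Matrix Complex

noncomputable section

/-- A primitive cube root of unity. -/
def ξ : ℂ := Complex.exp (2 * Real.pi * Complex.I / 3)

/-- `η = √3 / 3`. -/
def η : ℂ := (Real.sqrt 3 : ℂ) / 3

theorem IsPrimitiveRoot.zpow_eq_zpow_iff_dvd {G₀ : Type*} [CommGroupWithZero G₀] {ζ : G₀}
    {n : ℕ} (h : IsPrimitiveRoot ζ n) (hn : n ≠ 0) (a b : ℤ) :
    ζ ^ a = ζ ^ b ↔ (n : ℤ) ∣ a - b := by
  have hζ : ζ ≠ 0 := h.ne_zero hn
  rw [← h.zpow_eq_one_iff_dvd, zpow_sub₀ hζ, div_eq_one_iff_eq (zpow_ne_zero _ hζ)]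

theorem isPrimitiveRoot_ξ : IsPrimitiveRoot ξ 3 := by
  simpa [ξ] using Complex.isPrimitiveRoot_exp 3 three_ne_zero

theorem ξ_ne_zero : ξ ≠ 0 := Complex.exp_ne_zero _

theorem η_ne_zero : η ≠ 0 := by
  simp [η]

theorem det_fin_four_line_pair {R : Type*} [CommRing R] (a b c d x : R) :
    !![-1, 0, 0, 0; 0, 0, -1, x; a, b, -1, 0; c, d, 0, -1].det = b - x * d := by
  simp [det_succ_row_zero, Fin.sum_univ_succ, Fin.succAbove]
  ring

theorem det_line_intersection_formula_general
    (m k t j : ℤ) :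
    (!![(-1 : ℂ), 0, 0, 0;
        0, 0, -1, ξ ^ (t - 2);
        -(I ^ m * η), I ^ m * η * ξ ^ (j - 1), -1, 0;
        2 * I ^ m * η * ξ ^ (2 * k + 1 - j), I ^ m * η * ξ ^ (2 * k), 0, -1]).det
      = I ^ m * η * (ξ ^ (j - 1) - ξ ^ (2 * k + t - 2)) ∧
    ((!![(-1 : ℂ), 0, 0, 0;
        0, 0, -1, ξ ^ (t - 2);
        -(I ^ m * η), I ^ m * η * ξ ^ (j - 1), -1, 0;
        2 * I ^ m * η * ξ ^ (2 * k + 1 - j), I ^ m * η * ξ ^ (2 * k), 0, -1]).det = 0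
      ↔ (t + 2 * k - j - 1) % 3 = 0) := by
  have hfactor : I ^ m * η * ξ ^ (j - 1) - ξ ^ (t - 2) * (I ^ m * η * ξ ^ (2 * k))
      = I ^ m * η * (ξ ^ (j - 1) - ξ ^ (2 * k + t - 2)) := by
    rw [show 2 * k + t - 2 = (t - 2) + 2 * k by ring, zpow_add₀ ξ_ne_zero]
    ring
  have hcoeff : I ^ m * η ≠ 0 := mul_ne_zero (zpow_ne_zero _ I_ne_zero) η_ne_zero
  rw [det_fin_four_line_pair, hfactor, mul_eq_zero, or_iff_right hcoeff, sub_eq_zero,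
    isPrimitiveRoot_ξ.zpow_eq_zpow_iff_dvd three_ne_zero,
    show j - 1 - (2 * k + t - 2) = -(t + 2 * k - j - 1) by ring, dvd_neg,
    Int.dvd_iff_emod_eq_zero]
  exact ⟨rfl, Iff.rfl⟩

/-- For `t, j ∈ {2,3,4}`, `k ∈ {0,1,2}`, `m ∈ {0,1,2,3}`, the determinant of
the `4 × 4` matrix whose rows cut out the line `L_{1,t}` of the first type and
the line `L_{Zᵏ Tⱼ, λₘ}` of the second type equals
`iᵐ η (ξ^{j-1} − ξ^{2k+t-2})`; consequently it vanishes iff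
`t + 2k − j − 1 ≡ 0 (mod 3)`. -/
theorem det_line_intersection_formula
    (m k t j : ℤ)
    (hm : m ∈ ({0, 1, 2, 3} : Set ℤ)) (hk : k ∈ ({0, 1, 2} : Set ℤ))
    (ht : t ∈ ({2, 3, 4} : Set ℤ)) (hj : j ∈ ({2, 3, 4} : Set ℤ)) :
    (!![(-1 : ℂ), 0, 0, 0;
        0, 0, -1, ξ ^ (t - 2);
        -(I ^ m * η), I ^ m * η * ξ ^ (j - 1), -1, 0;
        2 * I ^ m * η * ξ ^ (2 * k + 1 - j), I ^ m * η * ξ ^ (2 * k), 0, -1]).det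
      = I ^ m * η * (ξ ^ (j - 1) - ξ ^ (2 * k + t - 2)) ∧
    ((!![(-1 : ℂ), 0, 0, 0;
        0, 0, -1, ξ ^ (t - 2);
        -(I ^ m * η), I ^ m * η * ξ ^ (j - 1), -1, 0;
        2 * I ^ m * η * ξ ^ (2 * k + 1 - j), I ^ m * η * ξ ^ (2 * k), 0, -1]).det = 0
      ↔ (t + 2 * k - j - 1) % 3 = 0) :=
  det_line_intersection_formula_general m k t j

end
end

section
/- In the Bareiss fraction-free triangularization of an integer matrix, after clearing below the diagonal the lower-right diagonal entry of the resulting upper-triangular matrix equals the determinant of the original matrix. Precisely: if A is an n×n integer matrix whose leading principal minors d₁,…,d_{n−1} are nonzero, then the Bareiss algorithm produces an upper triangular integer matrix B with B[k,k] equal to the k-th leading principal minor of A; in particular B[n,n] = det(A). -/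
/-!
After the steps with pivots `0, …, i - 1`, the entry `(s, j)` of the Bareiss matrix is the
bordered minor `D_t(s, j)` of `A` on rows `0, …, t - 1, s` and columns `0, …, t - 1, j`, where
`t = min i s`. For `s > i` the step with pivot `i` computes
`(D_i(s, j) D_i(i, i) - D_i(i, j) D_i(s, i)) / p_i`, with `p_i` the leading `i × i` minor (and the
previous diagonal entry `D_{i-1}(i-1, i-1)` is exactly `p_i`). Sylvester's identity
`D_{i+1}(s, j) p_i = D_i(s, j) D_i(i, i) - D_i(i, j) D_i(s, i)` shows that the division is exact
and yields `D_{i+1}(s, j)`. In the final matrix the entry `(s, j)` is `D_s(s, j)`, which has a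
repeated column for `j < s` and is the leading minor of size `s + 1` for `j = s`.
Sylvester's identity itself follows from the Schur complement formula over the fraction field.
-/

open Matrix

/-- One step of the Bareiss fraction-free elimination with pivot row `i`:
entries in rows below row `i` are updated by
`B[s,j] ← (B[s,j]·B[i,i] − B[i,j]·B[s,i]) div B[i−1,i−1]` (with the previous
pivot taken to be `1` when `i = 0`). -/
def bareissStep {n : ℕ} (i : ℕ) (B : Matrix (Fin n) (Fin n) ℤ) :
    Matrix (Fin n) (Fin n) ℤ :=
  if h : i < n then
    Matrix.of fun s j =>
      if i < (s : ℕ) then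
        (B s j * B ⟨i, h⟩ ⟨i, h⟩ - B ⟨i, h⟩ j * B s ⟨i, h⟩) /
          (if h0 : i = 0 then 1 else
            B ⟨i - 1, by omega⟩ ⟨i - 1, by omega⟩)
      else B s j
  else B

/-- The Bareiss fraction-free triangularization of an integer matrix. -/
def bareiss {n : ℕ} (A : Matrix (Fin n) (Fin n) ℤ) : Matrix (Fin n) (Fin n) ℤ :=
  (List.range n).foldl (fun B i => bareissStep i B) A

/-- The `k`-th leading principal minor of `A` (the determinant of the
top-left `(k+1) × (k+1)` submatrix, `0`-indexed). -/
def leadingMinor {n : ℕ} (A : Matrix (Fin n) (Fin n) ℤ) (k : Fin n) : ℤ :=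
  (A.submatrix (fun i : Fin ((k : ℕ) + 1) => Fin.castLE (by omega) i)
    (fun j : Fin ((k : ℕ) + 1) => Fin.castLE (by omega) j)).det

section Sylvester

variable {R α β ι κ : Type*}

theorem Matrix.submatrix_sumElim (A : Matrix α β R) (r₀ : ι → α) (r : κ → α) (c₀ : ι → β)
    (c : κ → β) :
    A.submatrix (Sum.elim r₀ r) (Sum.elim c₀ c) =
      fromBlocks (A.submatrix r₀ c₀) (A.submatrix r₀ c) (A.submatrix r c₀) (A.submatrix r c) := by
  ext (i | i) (j | j) <;> rfl

variable [Fintype ι] [DecidableEq ι] [Fintype κ] [DecidableEq κ] [CommRing R]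

theorem Matrix.det_submatrix_sumElim_of_invertible (A : Matrix α β R) (r₀ : ι → α) (r : κ → α)
    (c₀ : ι → β) (c : κ → β) [Invertible (A.submatrix r₀ c₀)] :
    (A.submatrix (Sum.elim r₀ r) (Sum.elim c₀ c)).det = (A.submatrix r₀ c₀).det *
      (A.submatrix r c - A.submatrix r c₀ * ⅟(A.submatrix r₀ c₀) * A.submatrix r₀ c).det := by
  rw [submatrix_sumElim, det_fromBlocks₁₁]

theorem Matrix.det_pow_mul_det_submatrix_sumElim_of_invertible (A : Matrix α β R) (r₀ : ι → α)
    (r : κ → α) (c₀ : ι → β) (c : κ → β) [Invertible (A.submatrix r₀ c₀)] :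
    (A.submatrix r₀ c₀).det ^ Fintype.card κ * (A.submatrix (Sum.elim r₀ r) (Sum.elim c₀ c)).det =
      (A.submatrix r₀ c₀).det * (of fun x y =>
        (A.submatrix (Sum.elim r₀ fun _ : Fin 1 => r x)
          (Sum.elim c₀ fun _ : Fin 1 => c y)).det).det := by
  set S := A.submatrix r c - A.submatrix r c₀ * ⅟(A.submatrix r₀ c₀) * A.submatrix r₀ c
  have hborder : (of fun x y => (A.submatrix (Sum.elim r₀ fun _ : Fin 1 => r x)
      (Sum.elim c₀ fun _ : Fin 1 => c y)).det) = (A.submatrix r₀ c₀).det • S := by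
    ext x y
    rw [of_apply, det_submatrix_sumElim_of_invertible, det_unique (n := Fin 1)]
    simp [S, mul_apply, invOf_eq_nonsing_inv]
  rw [hborder, det_submatrix_sumElim_of_invertible, det_smul]
  ring

/-- Sylvester's determinant identity. -/
theorem Matrix.det_pow_mul_det_submatrix_sumElim [IsDomain R] (A : Matrix α β R) (r₀ : ι → α)
    (r : κ → α) (c₀ : ι → β) (c : κ → β) (hdet : (A.submatrix r₀ c₀).det ≠ 0) :
    (A.submatrix r₀ c₀).det ^ Fintype.card κ * (A.submatrix (Sum.elim r₀ r) (Sum.elim c₀ c)).det =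
      (A.submatrix r₀ c₀).det * (of fun x y =>
        (A.submatrix (Sum.elim r₀ fun _ : Fin 1 => r x)
          (Sum.elim c₀ fun _ : Fin 1 => c y)).det).det := by
  let f := algebraMap R (FractionRing R)
  have : Invertible ((A.map f).submatrix r₀ c₀) := invertibleOfIsUnitDet _ <| by
    rw [isUnit_iff_ne_zero, submatrix_map, ← RingHom.mapMatrix_apply, ← RingHom.map_det,
      map_ne_zero_iff f (IsFractionRing.injective R _)]
    exact hdet
  apply IsFractionRing.injective R (FractionRing R)
  simp only [map_mul, map_pow, RingHom.map_det, RingHom.mapMatrix_apply]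
  convert det_pow_mul_det_submatrix_sumElim_of_invertible (A.map f) r₀ r c₀ c using 3
  all_goals first | rfl | (ext x y; exact RingHom.map_det f _)

end Sylvester

theorem Fin.append_castLE_const {n t : ℕ} (ht : t ≤ n) (h : t + 1 ≤ n) :
    Fin.append (Fin.castLE ht) (fun _ : Fin 1 => (⟨t, h⟩ : Fin n)) = Fin.castLE h := by
  funext a
  refine Fin.lastCases ?_ (fun b => ?_) a <;> ext <;> simp [Fin.append_right_eq_snoc]

theorem Fin.append_append_const {α : Type*} {t : ℕ} (u : Fin t → α) (x y : α) :
    Fin.append (Fin.append u fun _ : Fin 1 => x) (fun _ : Fin 1 => y) = Fin.append u ![x, y] := by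
  have hxy : Fin.append (fun _ : Fin 1 => x) (fun _ : Fin 1 => y) = ![x, y] := by
    funext i
    fin_cases i <;> rfl
  rw [Fin.append_assoc, hxy]
  rfl

theorem Matrix.det_submatrix_sumElim_eq_det_submatrix_append {R α β : Type*} [CommRing R]
    {p q : ℕ} (A : Matrix α β R) (r₀ : Fin p → α) (r : Fin q → α) (c₀ : Fin p → β) (c : Fin q → β) :
    (A.submatrix (Sum.elim r₀ r) (Sum.elim c₀ c)).det =
      (A.submatrix (Fin.append r₀ r) (Fin.append c₀ c)).det := by
  rw [← det_submatrix_equiv_self finSumFinEquiv, submatrix_submatrix]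
  congr 2 <;> ext (i | i) <;> simp

section BorderedMinor

variable {R : Type*} [CommRing R] {n : ℕ}

def borderedMinor (A : Matrix (Fin n) (Fin n) R) (t : ℕ) (ht : t ≤ n) (s j : Fin n) : R :=
  (A.submatrix (Sum.elim (Fin.castLE ht) fun _ : Fin 1 => s)
    (Sum.elim (Fin.castLE ht) fun _ : Fin 1 => j)).det

theorem borderedMinor_zero (A : Matrix (Fin n) (Fin n) R) (s j : Fin n) :
    borderedMinor A 0 (Nat.zero_le n) s j = A s j := by
  rw [borderedMinor, det_submatrix_sumElim_eq_det_submatrix_append]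
  exact (det_unique (n := Fin 1) _).trans rfl

theorem borderedMinor_self (A : Matrix (Fin n) (Fin n) R) {t : ℕ} (ht : t ≤ n) (h : t + 1 ≤ n) :
    borderedMinor A t ht ⟨t, h⟩ ⟨t, h⟩ = (A.submatrix (Fin.castLE h) (Fin.castLE h)).det := by
  rw [borderedMinor, det_submatrix_sumElim_eq_det_submatrix_append, Fin.append_castLE_const]

theorem borderedMinor_eq_zero_of_lt (A : Matrix (Fin n) (Fin n) R) {s j : Fin n} (hjs : j < s) :
    borderedMinor A s s.isLt.le s j = 0 :=
  det_zero_of_column_eq (i := Sum.inl ⟨j, hjs⟩) (j := Sum.inr 0) Sum.inl_ne_inr fun _ => rfl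

theorem borderedMinor_succ_mul [IsDomain R] (A : Matrix (Fin n) (Fin n) R) {t : ℕ} (ht : t ≤ n)
    (h : t + 1 ≤ n) (hdet : (A.submatrix (Fin.castLE ht) (Fin.castLE ht)).det ≠ 0) (s j : Fin n) :
    borderedMinor A (t + 1) h s j * (A.submatrix (Fin.castLE ht) (Fin.castLE ht)).det =
      borderedMinor A t ht s j * borderedMinor A t ht ⟨t, h⟩ ⟨t, h⟩ -
        borderedMinor A t ht ⟨t, h⟩ j * borderedMinor A t ht s ⟨t, h⟩ := by
  have sylvester := det_pow_mul_det_submatrix_sumElim A (Fin.castLE ht) ![⟨t, h⟩, s]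
    (Fin.castLE ht) ![⟨t, h⟩, j] hdet
  rw [Fintype.card_fin, det_fin_two, pow_two, mul_assoc] at sylvester
  have hsucc : borderedMinor A (t + 1) h s j =
      (A.submatrix (Sum.elim (Fin.castLE ht) ![⟨t, h⟩, s])
        (Sum.elim (Fin.castLE ht) ![⟨t, h⟩, j])).det := by
    rw [borderedMinor, det_submatrix_sumElim_eq_det_submatrix_append,
      det_submatrix_sumElim_eq_det_submatrix_append, ← Fin.append_castLE_const ht h,
      Fin.append_append_const, Fin.append_append_const]
  rw [hsucc, mul_comm, mul_left_cancel₀ hdet sylvester]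
  simp only [borderedMinor, of_apply, cons_val_zero, cons_val_one, cons_val_fin_one]
  ring

end BorderedMinor

section Bareiss

variable {n : ℕ}

theorem bareissStep_apply_eq_borderedMinor {A : Matrix (Fin n) (Fin n) ℤ} {i : ℕ} (hi : i < n)
    (hdet : (A.submatrix (Fin.castLE hi.le) (Fin.castLE hi.le)).det ≠ 0)
    {B : Matrix (Fin n) (Fin n) ℤ}
    (hB : ∀ s j : Fin n, B s j = borderedMinor A (min i s) (by omega) s j) (s j : Fin n) :
    bareissStep i B s j = borderedMinor A (min (i + 1) s) (by omega) s j := by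
  have hdiv : (if h0 : i = 0 then 1 else B ⟨i - 1, by omega⟩ ⟨i - 1, by omega⟩) =
      (A.submatrix (Fin.castLE hi.le) (Fin.castLE hi.le)).det := by
    split_ifs with h0
    · subst h0
      exact det_isEmpty.symm
    · obtain ⟨k, rfl⟩ := Nat.exists_eq_succ_of_ne_zero h0
      simp only [hB, Nat.succ_sub_one, min_eq_right k.le_succ]
      exact borderedMinor_self A _ _
  rw [bareissStep, dif_pos hi, of_apply, hdiv]
  split_ifs with his
  · simp only [hB, min_self, min_eq_left his.le, min_eq_left (Nat.succ_le_of_lt his)]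
    rw [← borderedMinor_succ_mul A _ _ hdet]
    exact Int.mul_ediv_cancel _ hdet
  · simp only [hB, min_eq_right (not_lt.1 his), min_eq_right (Nat.le_succ_of_le (not_lt.1 his))]

theorem det_submatrix_castLE_ne_zero {A : Matrix (Fin n) (Fin n) ℤ}
    (hA : ∀ k : Fin n, (k : ℕ) + 1 < n → leadingMinor A k ≠ 0) {t : ℕ} (ht : t < n) :
    (A.submatrix (Fin.castLE ht.le) (Fin.castLE ht.le)).det ≠ 0 := by
  cases t with
  | zero => simp
  | succ k => exact hA ⟨k, by omega⟩ ht

theorem foldl_bareissStep_apply {A : Matrix (Fin n) (Fin n) ℤ}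
    (hA : ∀ k : Fin n, (k : ℕ) + 1 < n → leadingMinor A k ≠ 0) {i : ℕ} (hi : i ≤ n)
    (s j : Fin n) :
    (List.range i).foldl (fun B k => bareissStep k B) A s j =
      borderedMinor A (min i s) (by omega) s j := by
  induction i generalizing s j with
  | zero => simpa using (borderedMinor_zero A s j).symm
  | succ i ih =>
    rw [List.range_succ, List.foldl_append, List.foldl_cons, List.foldl_nil]
    exact bareissStep_apply_eq_borderedMinor hi (det_submatrix_castLE_ne_zero hA hi)
      (ih (by omega)) s j

theorem bareiss_apply {A : Matrix (Fin n) (Fin n) ℤ}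
    (hA : ∀ k : Fin n, (k : ℕ) + 1 < n → leadingMinor A k ≠ 0) (s j : Fin n) :
    bareiss A s j = borderedMinor A s s.isLt.le s j := by
  simpa only [bareiss, min_eq_right s.isLt.le] using foldl_bareissStep_apply hA le_rfl s j

theorem leadingMinor_eq_det (A : Matrix (Fin n) (Fin n) ℤ) {k : Fin n} (hk : (k : ℕ) + 1 = n) :
    leadingMinor A k = A.det := by
  rw [leadingMinor, ← det_submatrix_equiv_self (finCongr hk) A]
  rfl

end Bareiss

/-- If all proper leading principal minors of the integer matrix `A` are
nonzero, then the Bareiss algorithm produces an upper triangular matrix `B`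
whose `k`-th diagonal entry is the `k`-th leading principal minor of `A`;
in particular, the lower-right entry of `B` is `det A`. -/
theorem bareiss_diagonal_eq_leading_minors
    {n : ℕ} (A : Matrix (Fin n) (Fin n) ℤ)
    (hminors : ∀ k : Fin n, (k : ℕ) + 1 < n → leadingMinor A k ≠ 0) :
    (∀ i j : Fin n, (j : ℕ) < (i : ℕ) → bareiss A i j = 0) ∧
    (∀ k : Fin n, bareiss A k k = leadingMinor A k) ∧
    (∀ h0 : 0 < n,
      bareiss A ⟨n - 1, by omega⟩ ⟨n - 1, by omega⟩ = A.det) := by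
  refine ⟨fun i j hji => ?_, fun k => ?_, fun h0 => ?_⟩
  · rw [bareiss_apply hminors]
    exact borderedMinor_eq_zero_of_lt A hji
  · rw [bareiss_apply hminors]
    exact borderedMinor_self A _ _
  · rw [bareiss_apply hminors, ← leadingMinor_eq_det A (k := ⟨n - 1, _⟩) (Nat.sub_add_cancel h0)]
    exact borderedMinor_self A _ _
end

section
/- For the degree-d surface S = {φ(x₀,x₁) = ψ(x₂,x₃)} ⊂ P³ with φ, ψ squarefree homogeneous of degree d, the number of 'lines of the first type' — lines joining a zero of φ on L₁ = V(x₂,x₃) to a zero of ψ on L₂ = V(x₀,x₁) — is exactly d², and each such line is contained in S. -/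
/-!
Dehomogenizing a binary form `φ` of degree `n` gives `p(t) = φ(t, 1)` with `φ = p.homogenize n`.
Under `ℙ¹ ≃ K ∪ {∞}` the zeros of `φ` are the roots of `p`, together with `∞` exactly when
`p.coeff n = 0`. Squarefreeness of `φ` passes to `p`, so over an algebraically closed field `p`
has `deg p` distinct roots; it also forbids `x₁² ∣ φ`, so `deg p ≥ n - 1`. Either way `φ` has
exactly `n` zeros in `ℙ¹`, and the count for pairs is `d · d`. Containment of the lines is
homogeneity: `φ (s • u) = s ^ d * φ u`.
-/

open MvPolynomial

open scoped LinearAlgebra.Projectivization OnePoint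

namespace MvPolynomial.IsHomogeneous

variable {σ R : Type*} [CommSemiring R] {φ : MvPolynomial σ R} {n : ℕ}

theorem eval_smul (hφ : φ.IsHomogeneous n) (s : R) (x : σ → R) :
    eval (s • x) φ = s ^ n * eval x φ := by
  rw [eval_eq, eval_eq, Finset.mul_sum]
  refine Finset.sum_congr rfl fun m hm => ?_
  have hdeg : ∑ i ∈ m.support, m i = n := by
    simpa [Finsupp.weight_apply, Finsupp.sum] using hφ (mem_support_iff.mp hm)
  simp only [Pi.smul_apply, smul_eq_mul, mul_pow, Finset.prod_mul_distrib,
    Finset.prod_pow_eq_pow_sum, hdeg]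
  ring

theorem eq_zero_of_isUnit [Nontrivial R] (hφ : φ.IsHomogeneous n) (hu : IsUnit φ) : n = 0 := by
  by_contra hn
  have h0 : constantCoeff φ = 0 := hφ.coeff_eq_zero (by simpa using Ne.symm hn)
  exact not_isUnit_zero (h0 ▸ hu.map constantCoeff)

theorem eval_rep_eq_zero_iff {K : Type*} [Field K] {φ : MvPolynomial σ K}
    (hφ : φ.IsHomogeneous n) (v : σ → K) (hv : v ≠ 0) :
    eval (Projectivization.mk K v hv).rep φ = 0 ↔ eval v φ = 0 := by
  obtain ⟨a, ha⟩ := Projectivization.exists_smul_eq_mk_rep K v hv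
  rw [← ha, Units.smul_def, hφ.eval_smul, mul_eq_zero, or_iff_right (pow_ne_zero _ a.ne_zero)]

theorem natDegree_aeval_X_one_le {φ : MvPolynomial (Fin 2) R} (hφ : φ.IsHomogeneous n) :
    (MvPolynomial.aeval ![(Polynomial.X : Polynomial R), 1] φ).natDegree ≤ n := by
  rw [φ.as_sum, map_sum]
  refine Polynomial.natDegree_sum_le_of_forall_le _ _ fun m hm => ?_
  have hm : m 0 + m 1 = n := by
    simpa [Finsupp.weight_apply, Finsupp.sum_fintype] using hφ (mem_support_iff.mp hm)
  rw [aeval_monomial, Finsupp.prod_fintype _ _ (by simp), Fin.prod_univ_two]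
  simp only [Matrix.cons_val_zero, Matrix.cons_val_one, one_pow, mul_one,
    ← Polynomial.C_eq_algebraMap]
  exact (Polynomial.natDegree_C_mul_X_pow_le _ _).trans (by omega)

end MvPolynomial.IsHomogeneous

namespace OnePoint

theorem ncard_eq_ncard_preimage_coe_add {X : Type*} {s : Set (OnePoint X)}
    (hs : ((↑) ⁻¹' s : Set X).Finite) [Decidable (∞ ∈ s)] :
    s.ncard = ((↑) ⁻¹' s : Set X).ncard + if ∞ ∈ s then 1 else 0 := by
  have himage : (↑) '' ((↑) ⁻¹' s : Set X) = s \ {∞} := by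
    rw [Set.image_preimage_eq_inter_range, ← compl_infty, Set.sdiff_eq]
  rw [← Set.ncard_image_of_injective _ (coe_injective (X := X)), himage]
  have hfin : (s \ {∞}).Finite := himage ▸ hs.image _
  split_ifs with h
  · exact (Set.ncard_sdiff_singleton_add_one h (hfin.of_sdiff (Set.finite_singleton ∞))).symm
  · rw [Set.sdiff_singleton_eq_self h, add_zero]

end OnePoint

namespace Polynomial

theorem eval_homogenize_one_zero {R : Type*} [CommSemiring R] (p : R[X]) (n : ℕ) :
    MvPolynomial.eval ![1, 0] (p.homogenize n) = p.coeff n := by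
  rw [homogenize, map_sum, Finset.Nat.sum_antidiagonal_eq_sum_range_succ_mk,
    Finset.sum_eq_single n]
  · simp [MvPolynomial.eval_monomial, Finsupp.prod_fintype, Fin.prod_univ_two]
  · intro k hk hkn
    rw [Finset.mem_range] at hk
    simp [MvPolynomial.eval_monomial, Finsupp.prod_fintype, Fin.prod_univ_two,
      zero_pow (by omega : n - k ≠ 0)]
  · simp

variable {K : Type*} [Field K] {p : K[X]} {n : ℕ}

theorem ne_zero_of_squarefree_homogenize (h : Squarefree (p.homogenize n)) : p ≠ 0 := by
  rintro rfl
  exact h.ne_zero (homogenize_zero n)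

theorem squarefree_of_squarefree_homogenize (hp : p.natDegree ≤ n)
    (h : Squarefree (p.homogenize n)) : Squarefree p := by
  have hp0 := ne_zero_of_squarefree_homogenize h
  rintro x ⟨y, rfl⟩
  have hx : x ≠ 0 := by rintro rfl; simp at hp0
  have hy : y ≠ 0 := by rintro rfl; simp at hp0
  rw [natDegree_mul (mul_ne_zero hx hx) hy, natDegree_mul hx hx] at hp
  obtain ⟨k, rfl⟩ := Nat.exists_eq_add_of_le hp
  rw [add_assoc _ y.natDegree, homogenize_mul _ _ natDegree_mul_le (Nat.le_add_right _ _),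
    homogenize_mul _ _ le_rfl le_rfl] at h
  have hdeg : x.natDegree = 0 :=
    (isHomogeneous_homogenize x).eq_zero_of_isUnit (h _ (dvd_mul_right _ _))
  exact isUnit_iff_degree_eq_zero.mpr ((degree_eq_iff_natDegree_eq hx).mpr hdeg)

theorem natDegree_add_one_eq_of_coeff_eq_zero (hp : p.natDegree ≤ n)
    (h : Squarefree (p.homogenize n)) (hc : p.coeff n = 0) : p.natDegree + 1 = n := by
  have hp0 := ne_zero_of_squarefree_homogenize h
  have hlt : p.natDegree < n :=
    lt_of_le_of_ne hp fun he => hp0 (leadingCoeff_eq_zero.mp (by rwa [leadingCoeff, he]))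
  by_contra hne
  -- otherwise `X 1 ^ 2` divides the form
  obtain ⟨k, rfl⟩ := Nat.exists_eq_add_of_le (by omega : p.natDegree + 2 ≤ n)
  have hsplit := homogenize_mul p 1 (m := p.natDegree + k) (n := 2) (by omega) (by simp)
  rw [mul_one, homogenize_one, sq, add_right_comm] at hsplit
  rw [hsplit] at h
  exact one_ne_zero ((MvPolynomial.isHomogeneous_X K 1).eq_zero_of_isUnit
    (h _ (dvd_mul_left _ _)))

theorem ncard_setOfPred_isRoot [IsAlgClosed K] (hp : Squarefree p) :
    {a | p.IsRoot a}.ncard = p.natDegree := by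
  classical
  have hroots : {a | p.IsRoot a} = ↑p.roots.toFinset := by
    ext a
    simp [hp.ne_zero]
  rw [hroots, Set.ncard_coe_finset, Multiset.toFinset_card_of_nodup
    (nodup_roots (PerfectField.separable_iff_squarefree.mpr hp)),
    (IsAlgClosed.splits p).natDegree_eq_card_roots]

theorem ncard_setOf_eval_rep_homogenize_eq_zero [IsAlgClosed K] (hp : p.natDegree ≤ n)
    (h : Squarefree (p.homogenize n)) :
    {x : ℙ K (Fin 2 → K) | MvPolynomial.eval x.rep (p.homogenize n) = 0}.ncard = n := by
  classical
  set Z := {x : ℙ K (Fin 2 → K) | MvPolynomial.eval x.rep (p.homogenize n) = 0}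
  set e := OnePoint.equivProjectivization K
  have hhom := isHomogeneous_homogenize (R := K) p (n := n)
  have haffine : ((↑) ⁻¹' (e ⁻¹' Z) : Set K) = {a | p.IsRoot a} := by
    ext a
    simp [Z, e, hhom.eval_rep_eq_zero_iff, eval_homogenize hp]
  have hinfty : ∞ ∈ e ⁻¹' Z ↔ p.coeff n = 0 := by
    simp [Z, e, hhom.eval_rep_eq_zero_iff, eval_homogenize_one_zero]
  have hsf := squarefree_of_squarefree_homogenize hp h
  rw [← Set.ncard_preimage_of_injective_subset_range e.injective (by simp),
    OnePoint.ncard_eq_ncard_preimage_coe_add (haffine ▸ finite_setOfPred_isRoot hsf.ne_zero),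
    haffine, ncard_setOfPred_isRoot hsf]
  by_cases hc : p.coeff n = 0
  · rw [if_pos (hinfty.mpr hc), natDegree_add_one_eq_of_coeff_eq_zero hp h hc]
  · rw [if_neg (mt hinfty.mp hc), add_zero]
    exact le_antisymm hp (le_natDegree_of_ne_zero hc)

end Polynomial

theorem MvPolynomial.IsHomogeneous.ncard_setOf_eval_rep_eq_zero {K : Type*} [Field K]
    [IsAlgClosed K] {φ : MvPolynomial (Fin 2) K} {n : ℕ} (hφ : φ.IsHomogeneous n)
    (hsf : Squarefree φ) :
    {x : ℙ K (Fin 2 → K) | eval x.rep φ = 0}.ncard = n := by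
  rw [← Polynomial.homogenize_eq_of_isHomogeneous hφ rfl] at hsf ⊢
  exact Polynomial.ncard_setOf_eval_rep_homogenize_eq_zero hφ.natDegree_aeval_X_one_le hsf

theorem lines_first_type_count_and_containment_general
    (d : ℕ)
    (φ ψ : MvPolynomial (Fin 2) ℂ)
    (hφ : φ.IsHomogeneous d) (hψ : ψ.IsHomogeneous d)
    (hφsf : Squarefree φ) (hψsf : Squarefree ψ) :
    Set.ncard ({p : Projectivization ℂ (Fin 2 → ℂ) | MvPolynomial.eval p.rep φ = 0} ×ˢ
        {q : Projectivization ℂ (Fin 2 → ℂ) | MvPolynomial.eval q.rep ψ = 0}) = d ^ 2 ∧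
    ∀ u v : Fin 2 → ℂ, MvPolynomial.eval u φ = 0 → MvPolynomial.eval v ψ = 0 →
      ∀ s t : ℂ, MvPolynomial.eval (s • u) φ = MvPolynomial.eval (t • v) ψ := by
  refine ⟨?_, fun u v hu hv s t => ?_⟩
  · rw [Set.ncard_prod, hφ.ncard_setOf_eval_rep_eq_zero hφsf,
      hψ.ncard_setOf_eval_rep_eq_zero hψsf, sq]
  · rw [hφ.eval_smul, hψ.eval_smul, hu, hv, mul_zero, mul_zero]

/-- For the degree-`d` surface `S = {φ(x₀,x₁) = ψ(x₂,x₃)} ⊂ ℙ³` with `φ, ψ`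
squarefree homogeneous of degree `d`, the lines of the first type — joining a
zero of `φ` on `L₁ = V(x₂,x₃)` to a zero of `ψ` on `L₂ = V(x₀,x₁)` — number
exactly `d²` (the zero sets in `ℙ¹` have `d` points each), and each such line
lies on `S`. -/
theorem lines_first_type_count_and_containment
    (d : ℕ) (hd : 1 ≤ d)
    (φ ψ : MvPolynomial (Fin 2) ℂ)
    (hφ : φ.IsHomogeneous d) (hψ : ψ.IsHomogeneous d)
    (hφsf : Squarefree φ) (hψsf : Squarefree ψ) :
    Set.ncard ({p : Projectivization ℂ (Fin 2 → ℂ) | MvPolynomial.eval p.rep φ = 0} ×ˢ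
        {q : Projectivization ℂ (Fin 2 → ℂ) | MvPolynomial.eval q.rep ψ = 0}) = d ^ 2 ∧
    ∀ u v : Fin 2 → ℂ, MvPolynomial.eval u φ = 0 → MvPolynomial.eval v ψ = 0 →
      ∀ s t : ℂ, MvPolynomial.eval (s • u) φ = MvPolynomial.eval (t • v) ψ :=
  lines_first_type_count_and_containment_general d φ ψ hφ hψ hφsf hψsf
end
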